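/- arXiv:2504.19512 — 3 statements merged into one kernel-verified Lean document; each statement's English description precedes it below -/
import Mathlib

section
/- Let G be a finite group, H ≤ G an abelian subgroup, and μ : H × H → ℂˣ a 2-cocycle. Define Â_H^μ := (1/|H|)·Σ_{h₁∈H} Σ_{h₂∈H} alt_μ(h₁,h₂)·F^{h₁,h₂} in the ribbon algebra of G. Then: (1) Â_H^μ * Â_H^μ = Â_H^μ; (2) Â_H^μ * Ω = Ω; (3) 𝐒[Â_H^μ] = Â_H^μ; (4) 𝐓[Â_H^μ] = Â_H^μ. -/
/-!
Statement 1: For a finite group `G`, an abelian subgroup `H ≤ G`, and a 2-cocycle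
`μ : H × H → ℂˣ`, the element `Â_H^μ := (1/|H|)·Σ_{h₁,h₂∈H} alt_μ(h₁,h₂)·F^{h₁,h₂}`
of the ribbon algebra satisfies the four consistency conditions.
-/

open scoped Classical

noncomputable section

/-- `F^{g,h}`: the indicator function of the pair `(g,h)`. -/
def Fgh {G : Type*} (g h : G) : G × G → ℂ := fun x => if x = (g, h) then 1 else 0

/-- The multiplication of the ribbon algebra:
`(f₁ * f₂)(a,b) = Σ_{c ∈ G} f₁(a,c)·f₂(a,c⁻¹·b)`. -/
def rmul {G : Type*} [Group G] [Fintype G] (f₁ f₂ : G × G → ℂ) : G × G → ℂ :=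
  fun x => ∑ c : G, f₁ (x.1, c) * f₂ (x.1, c⁻¹ * x.2)

/-- The S-transformation `(𝐒f)(a,b) = f(b⁻¹,a)`. -/
def Strans {G : Type*} [Group G] (f : G × G → ℂ) : G × G → ℂ := fun x => f (x.2⁻¹, x.1)

/-- The T-transformation `(𝐓f)(a,b) = f(a,a⁻¹b)`. -/
def Ttrans {G : Type*} [Group G] (f : G × G → ℂ) : G × G → ℂ := fun x => f (x.1, x.1⁻¹ * x.2)

/-- The Ω-strand `Ω := (1/|G|)·Σ_{g∈G} F^{e,g}`. -/
def Omega (G : Type*) [Group G] [Fintype G] : G × G → ℂ :=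
  (Fintype.card G : ℂ)⁻¹ • ∑ g : G, Fgh (1 : G) g

/-- A 2-cocycle on a group `H` with values in `ℂˣ`. -/
def IsTwoCocycle {H : Type*} [Group H] (μ : H → H → ℂˣ) : Prop :=
  ∀ a b c : H, μ a b * μ (a * b) c = μ a (b * c) * μ b c

/-- `alt_μ(a,b) := μ(a,b)/μ(b,a)`. -/
def altMap {H : Type*} [Group H] (μ : H → H → ℂˣ) (a b : H) : ℂˣ := μ a b / μ b a

/-- The twisted boundary term
`Â_H^μ := (1/|H|)·Σ_{h₁∈H} Σ_{h₂∈H} alt_μ(h₁,h₂)·F^{h₁,h₂}`. -/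
def AhatMu {G : Type*} [Group G] [Fintype G] (H : Subgroup G) (μ : H → H → ℂˣ) :
    G × G → ℂ :=
  (Fintype.card H : ℂ)⁻¹ •
    ∑ h₁ : H, ∑ h₂ : H, ((altMap μ h₁ h₂ : ℂˣ) : ℂ) • Fgh (h₁ : G) (h₂ : G)

/-
For abelian `H` the cocycle identity makes each `alt_μ(a, ·)` a character of `H`; moreover
`alt_μ(a, a) = 1`, `alt_μ(b, a) = alt_μ(a, b)⁻¹` and `alt_μ(1, ·) = 1`. Since `Â_H^μ(a, b)` is
`|H|⁻¹ alt_μ(a, b)` on `H × H` and `0` elsewhere, the four identities come down to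
`alt_μ(a, c) alt_μ(a, c⁻¹b) = alt_μ(a, b)` (all `|H|` summands of the product agree),
`Σ_c Â_H^μ(1, c) = 1`, `alt_μ(b⁻¹, a) = alt_μ(a, b)` and `alt_μ(a, a⁻¹b) = alt_μ(a, b)`.
-/

section Alternating

variable {H : Type*} [Group H] {μ : H → H → ℂˣ}

theorem altMap_self (a : H) : altMap μ a a = 1 := div_self' _

theorem altMap_swap (a b : H) : altMap μ b a = (altMap μ a b)⁻¹ :=
  (inv_div _ _).symm

theorem altMap_one_left (hμ : IsTwoCocycle μ) (b : H) : altMap μ 1 b = 1 := by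
  have h₁ : μ 1 1 = μ 1 b := by simpa using hμ 1 1 b
  have h₂ : μ b 1 = μ 1 1 := by simpa using hμ b 1 1
  rw [altMap, h₂, h₁, div_self']

theorem altMap_mul_right (hcomm : ∀ a b : H, a * b = b * a) (hμ : IsTwoCocycle μ)
    (a b c : H) : altMap μ a (b * c) = altMap μ a b * altMap μ a c := by
  have h₁ := congrArg Units.val (hμ a b c)
  have h₂ := congrArg Units.val (hμ b a c)
  have h₃ := congrArg Units.val (hμ b c a)
  rw [hcomm b a] at h₂
  rw [hcomm c a] at h₃
  push_cast at h₁ h₂ h₃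
  ext
  simp only [altMap, Units.val_mul, Units.val_div_eq_div_val]
  rw [div_mul_div_comm, div_eq_div_iff (by simp) (by simp)]
  refine mul_right_cancel₀ (Units.ne_zero (μ b c)) ?_
  linear_combination
    -(μ b a * μ c a : ℂ) * h₁ + (μ a b * μ c a : ℂ) * h₂ - (μ a b * μ a c : ℂ) * h₃

def altHom (hcomm : ∀ a b : H, a * b = b * a) (hμ : IsTwoCocycle μ) (a : H) : H →* ℂˣ :=
  MonoidHom.mk' (altMap μ a) (altMap_mul_right hcomm hμ a)

theorem altMap_inv_right (hcomm : ∀ a b : H, a * b = b * a) (hμ : IsTwoCocycle μ)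
    (a b : H) : altMap μ a b⁻¹ = (altMap μ a b)⁻¹ :=
  map_inv (altHom hcomm hμ a) b

theorem altMap_inv_left (hcomm : ∀ a b : H, a * b = b * a) (hμ : IsTwoCocycle μ)
    (a b : H) : altMap μ b⁻¹ a = altMap μ a b := by
  rw [altMap_swap, altMap_inv_right hcomm hμ, inv_inv]

theorem altMap_inv_mul_right (hcomm : ∀ a b : H, a * b = b * a) (hμ : IsTwoCocycle μ)
    (a b : H) : altMap μ a (a⁻¹ * b) = altMap μ a b := by
  rw [altMap_mul_right hcomm hμ, altMap_inv_right hcomm hμ, altMap_self, inv_one, one_mul]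

end Alternating

theorem sum_ite_eq_coe {α M : Type*} [AddCommMonoid M] {p : α → Prop} [Fintype (Subtype p)]
    (b : α) (f : Subtype p → M) :
    (∑ h : Subtype p, if b = ↑h then f h else 0) = if hb : p b then f ⟨b, hb⟩ else 0 := by
  split_ifs with hb
  · simp_rw [show ∀ h : Subtype p, b = ↑h ↔ ⟨b, hb⟩ = h from
      fun h => (Subtype.ext_iff (a1 := ⟨b, hb⟩)).symm]
    simp
  · exact Finset.sum_eq_zero fun h _ => if_neg (by rintro rfl; exact hb h.2)

section RibbonAlgebra

variable {G : Type*} [Group G] [Fintype G]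

theorem sum_eq_sum_subgroup {M : Type*} [AddCommMonoid M] {H : Subgroup G} {f : G → M}
    (hf : ∀ c ∉ H, f c = 0) : ∑ c, f c = ∑ c : H, f c := by
  rw [← Fintype.sum_subtype_add_sum_subtype (· ∈ H) f,
    Finset.sum_eq_zero fun (c : {x // x ∉ H}) _ => hf c c.2, add_zero]

theorem sum_smul_Fgh_apply (H : Subgroup G) (w : H → H → ℂ) (a b : G) :
    (∑ h₁ : H, ∑ h₂ : H, w h₁ h₂ • Fgh (h₁ : G) (h₂ : G)) (a, b) =
      if h : a ∈ H ∧ b ∈ H then w ⟨a, h.1⟩ ⟨b, h.2⟩ else 0 := by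
  simp only [Finset.sum_apply, Pi.smul_apply, Fgh, Prod.mk.injEq, smul_eq_mul, mul_ite, mul_one,
    mul_zero, ite_and, Finset.sum_ite_irrel, sum_ite_eq_coe, Finset.sum_const_zero]
  by_cases ha : a ∈ H <;> by_cases hb : b ∈ H <;> simp [ha, hb]

theorem Omega_apply (a b : G) :
    Omega G (a, b) = if a = 1 then (Fintype.card G : ℂ)⁻¹ else 0 := by
  simp [Omega, Fgh, Prod.ext_iff, ite_and]

theorem card_subgroup_mul_inv (H : Subgroup G) :
    (Fintype.card H : ℂ) * (Fintype.card H : ℂ)⁻¹ = 1 :=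
  mul_inv_cancel₀ (Nat.cast_ne_zero.2 Fintype.card_ne_zero)

variable (H : Subgroup G) (μ : H → H → ℂˣ)

theorem AhatMu_apply (a b : G) :
    AhatMu H μ (a, b) = if h : a ∈ H ∧ b ∈ H
      then (Fintype.card H : ℂ)⁻¹ * altMap μ ⟨a, h.1⟩ ⟨b, h.2⟩ else 0 := by
  rw [AhatMu, Pi.smul_apply, sum_smul_Fgh_apply, smul_eq_mul, mul_dite, mul_zero]

theorem AhatMu_apply_of_mem {a b : G} (ha : a ∈ H) (hb : b ∈ H) :
    AhatMu H μ (a, b) = (Fintype.card H : ℂ)⁻¹ * altMap μ ⟨a, ha⟩ ⟨b, hb⟩ := by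
  rw [AhatMu_apply, dif_pos ⟨ha, hb⟩]

theorem AhatMu_apply_eq_zero {a b : G} (h : ¬(a ∈ H ∧ b ∈ H)) : AhatMu H μ (a, b) = 0 := by
  rw [AhatMu_apply, dif_neg h]

variable {H μ}

theorem sum_AhatMu_one_left (hμ : IsTwoCocycle μ) : ∑ c, AhatMu H μ (1, c) = 1 := by
  rw [sum_eq_sum_subgroup fun c hc => AhatMu_apply_eq_zero H μ fun h => hc h.2]
  have term (c : H) : AhatMu H μ (1, c) = (Fintype.card H : ℂ)⁻¹ := by
    rw [AhatMu_apply_of_mem H μ (one_mem H) c.2]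
    exact (mul_right_eq_self₀ ..).2 (.inl (congrArg Units.val (altMap_one_left hμ c)))
  simp [term]

theorem rmul_AhatMu_self (hcomm : ∀ a b : H, a * b = b * a) (hμ : IsTwoCocycle μ) :
    rmul (AhatMu H μ) (AhatMu H μ) = AhatMu H μ := by
  ext ⟨a, b⟩
  change ∑ c, AhatMu H μ (a, c) * AhatMu H μ (a, c⁻¹ * b) = AhatMu H μ (a, b)
  by_cases h : a ∈ H ∧ b ∈ H
  · rw [sum_eq_sum_subgroup fun c hc => by
      rw [AhatMu_apply_eq_zero H μ fun h => hc h.2, zero_mul]]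
    have key (c : H) : altMap μ ⟨a, h.1⟩ c * altMap μ ⟨a, h.1⟩ (c⁻¹ * ⟨b, h.2⟩) =
        altMap μ ⟨a, h.1⟩ ⟨b, h.2⟩ := by
      rw [← altMap_mul_right hcomm hμ, mul_inv_cancel_left]
    have term (c : H) : AhatMu H μ (a, c) * AhatMu H μ (a, (c : G)⁻¹ * b) =
        (Fintype.card H : ℂ)⁻¹ * AhatMu H μ (a, b) := by
      rw [AhatMu_apply_of_mem H μ h.1 c.2, AhatMu_apply_of_mem H μ h.1 (mul_mem (inv_mem c.2) h.2),
        AhatMu_apply_of_mem H μ h.1 h.2, mul_mul_mul_comm, ← Units.val_mul, mul_assoc]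
      exact congrArg (fun x : ℂˣ => _ * (_ * (x : ℂ))) (key c)
    rw [Finset.sum_congr rfl fun c _ => term c, Finset.sum_const, Finset.card_univ, nsmul_eq_mul,
      ← mul_assoc, card_subgroup_mul_inv, one_mul]
  · rw [AhatMu_apply_eq_zero H μ h]
    refine Finset.sum_eq_zero fun c _ => ?_
    by_cases hc : a ∈ H ∧ c ∈ H
    · rw [AhatMu_apply_eq_zero H μ (b := c⁻¹ * b)
        fun h' => h ⟨hc.1, by simpa using mul_mem hc.2 h'.2⟩, mul_zero]
    · rw [AhatMu_apply_eq_zero H μ hc, zero_mul]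

theorem rmul_AhatMu_Omega (hμ : IsTwoCocycle μ) : rmul (AhatMu H μ) (Omega G) = Omega G := by
  ext ⟨a, b⟩
  change ∑ c, AhatMu H μ (a, c) * Omega G (a, c⁻¹ * b) = Omega G (a, b)
  simp only [Omega_apply, ← Finset.sum_mul]
  split_ifs with ha
  · rw [ha, sum_AhatMu_one_left hμ, one_mul]
  · rw [mul_zero]

theorem Strans_AhatMu (hcomm : ∀ a b : H, a * b = b * a) (hμ : IsTwoCocycle μ) :
    Strans (AhatMu H μ) = AhatMu H μ := by
  ext ⟨a, b⟩
  change AhatMu H μ (b⁻¹, a) = AhatMu H μ (a, b)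
  by_cases h : a ∈ H ∧ b ∈ H
  · rw [AhatMu_apply_of_mem H μ (inv_mem h.2) h.1, AhatMu_apply_of_mem H μ h.1 h.2]
    exact congrArg (_ * ·) (congrArg Units.val (altMap_inv_left hcomm hμ ⟨a, h.1⟩ ⟨b, h.2⟩))
  · rw [AhatMu_apply_eq_zero H μ h, AhatMu_apply_eq_zero H μ (by rwa [inv_mem_iff, and_comm])]

theorem Ttrans_AhatMu (hcomm : ∀ a b : H, a * b = b * a) (hμ : IsTwoCocycle μ) :
    Ttrans (AhatMu H μ) = AhatMu H μ := by
  ext ⟨a, b⟩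
  change AhatMu H μ (a, a⁻¹ * b) = AhatMu H μ (a, b)
  by_cases h : a ∈ H ∧ b ∈ H
  · rw [AhatMu_apply_of_mem H μ h.1 (mul_mem (inv_mem h.1) h.2), AhatMu_apply_of_mem H μ h.1 h.2]
    exact congrArg (_ * ·) (congrArg Units.val (altMap_inv_mul_right hcomm hμ ⟨a, h.1⟩ ⟨b, h.2⟩))
  · rw [AhatMu_apply_eq_zero H μ h, AhatMu_apply_eq_zero H μ (by
      rwa [and_congr_right fun ha => H.mul_mem_cancel_left (inv_mem ha)])]

end RibbonAlgebra

/-- Abelian boundary terms satisfy the four consistency conditions. -/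
theorem abelian_boundary_terms (G : Type*) [Group G] [Fintype G] (H : Subgroup G)
    (hab : ∀ a b : H, a * b = b * a) (μ : H → H → ℂˣ) (hμ : IsTwoCocycle μ) :
    rmul (AhatMu H μ) (AhatMu H μ) = AhatMu H μ ∧
    rmul (AhatMu H μ) (Omega G) = Omega G ∧
    Strans (AhatMu H μ) = AhatMu H μ ∧
    Ttrans (AhatMu H μ) = AhatMu H μ :=
  ⟨rmul_AhatMu_self hab hμ, rmul_AhatMu_Omega hμ, Strans_AhatMu hab hμ, Ttrans_AhatMu hab hμ⟩

end
end

section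
/- Let G be a finite group, C a conjugacy class with chosen representative r ∈ C, and p : C → G a transversal with p(c)·r·p(c)⁻¹ = c for all c ∈ C. In the complex inner product space of functions G × G → ℂ with standard Hermitian inner product and standard basis vectors e_{(g,h)}, for an irreducible unitary representation R of Z(r) with matrix coefficients ρ^R_{nm}, indices 1 ≤ n,m ≤ d_R, and elements q, p̃ in the image of the transversal p, define v^{R}_{n,m,q,p̃} := Σ_{z∈Z(r)} ρ^R_{nm}(z)·e_{(q·z·p̃⁻¹, p̃·r·p̃⁻¹)}. Then: (i) if R and R' are non-isomorphic irreducible unitary representations of Z(r), then ⟨v^{R'}_{n',m',q',p̃'}, v^{R}_{n,m,q,p̃}⟩ = 0 for all indices; (ii) ⟨v^{R}_{n',m',q',p̃'}, v^{R}_{n,m,q,p̃}⟩ = δ_{n,n'}·δ_{m,m'}·δ_{q,q'}·δ_{p̃,p̃'}·|Z(r)|/d_R. -/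
/-!
Statement 12: Orthogonality of the vectors
`v^{R}_{n,m,q,p̃} := Σ_{z∈Z(r)} ρ^R_{nm}(z)·e_{(q·z·p̃⁻¹, p̃·r·p̃⁻¹)}` in the inner product
space of functions `G × G → ℂ`, for `q, p̃` in the image of the transversal.
-/

open scoped Classical

noncomputable section

/-- The standard Hermitian inner product on functions `G × G → ℂ` (conjugate-linear in the
first argument). -/
def herm {G : Type*} [Fintype G] (f g : G × G → ℂ) : ℂ :=
  ∑ x : G × G, (starRingEnd ℂ) (f x) * g x

/-- The conjugacy class of `r` in `G`, as a `Finset`. -/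
def conjClass {G : Type*} [Group G] [Fintype G] (r : G) : Finset G :=
  Finset.image (fun g => g * r * g⁻¹) Finset.univ

/-- The centralizer `Z(r)` of `r` in `G`, as a `Finset`. -/
def centFinset {G : Type*} [Group G] [Fintype G] (r : G) : Finset G :=
  Finset.univ.filter fun z => z * r = r * z

/-- `ρ : G → Matrix (Fin d) (Fin d) ℂ` restricts to a unitary representation of `Z(r)`. -/
def IsCentRep {G : Type*} [Group G] [Fintype G] (r : G) {d : ℕ}
    (ρ : G → Matrix (Fin d) (Fin d) ℂ) : Prop :=
  ρ 1 = 1 ∧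
  (∀ z w : G, z * r = r * z → w * r = r * w → ρ (z * w) = ρ z * ρ w) ∧
  (∀ z : G, z * r = r * z → ρ z ∈ Matrix.unitaryGroup (Fin d) ℂ)

/-- `ρ` restricts to an irreducible unitary representation of `Z(r)`. -/
def IsCentIrrep {G : Type*} [Group G] [Fintype G] (r : G) {d : ℕ}
    (ρ : G → Matrix (Fin d) (Fin d) ℂ) : Prop :=
  IsCentRep r ρ ∧
  ∀ M : Matrix (Fin d) (Fin d) ℂ,
    (∀ z : G, z * r = r * z → M * ρ z = ρ z * M) →
    ∃ c : ℂ, M = c • (1 : Matrix (Fin d) (Fin d) ℂ)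

/-- Isomorphism of two representations of the centralizer `Z(r)`. -/
def RepIsoOn {G : Type*} [Group G] [Fintype G] (r : G) {d₁ d₂ : ℕ}
    (ρ₁ : G → Matrix (Fin d₁) (Fin d₁) ℂ) (ρ₂ : G → Matrix (Fin d₂) (Fin d₂) ℂ) : Prop :=
  ∃ (U : Matrix (Fin d₁) (Fin d₂) ℂ) (V : Matrix (Fin d₂) (Fin d₁) ℂ),
    U * V = 1 ∧ V * U = 1 ∧ ∀ z : G, z * r = r * z → ρ₁ z * U = U * ρ₂ z

/-- The vector `v^{R}_{n,m,q,p̃} := Σ_{z∈Z(r)} ρ^R_{nm}(z)·e_{(q·z·p̃⁻¹, p̃·r·p̃⁻¹)}`. -/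
def vvec {G : Type*} [Group G] [Fintype G] (r : G) {d : ℕ}
    (ρ : G → Matrix (Fin d) (Fin d) ℂ) (n m : Fin d) (q pt : G) : G × G → ℂ :=
  ∑ z ∈ centFinset r, (ρ z n m) • Fgh (q * z * pt⁻¹) (pt * r * pt⁻¹)

section helpers
open scoped Matrix ComplexOrder
set_option linter.unusedSectionVars false
variable {G : Type*} [Group G] [Fintype G] (r : G)

lemma mem_cent_iff {z : G} : z ∈ centFinset r ↔ z * r = r * z := by
  simp [centFinset]

lemma cent_mul {z w : G} (hz : z * r = r * z) (hw : w * r = r * w) :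
    (z * w) * r = r * (z * w) := by
  rw [mul_assoc, hw, ← mul_assoc, hz, mul_assoc]

lemma cent_inv {z : G} (hz : z * r = r * z) : z⁻¹ * r = r * z⁻¹ := by
  have h : z⁻¹ * (z * r) * z⁻¹ = z⁻¹ * (r * z) * z⁻¹ := by rw [hz]
  simpa [mul_assoc] using h.symm

lemma sum_cent_mul_right {M : Type*} [AddCommMonoid M] {w : G} (hw : w * r = r * w)
    (f : G → M) : ∑ z ∈ centFinset r, f (z * w) = ∑ z ∈ centFinset r, f z := by
  refine Finset.sum_equiv (Equiv.mulRight w) (fun z => ?_) (fun z _ => rfl)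
  simp only [Equiv.coe_mulRight, mem_cent_iff]
  constructor
  · intro hz; exact cent_mul r hz hw
  · intro hzw
    have := cent_mul r hzw (cent_inv r hw)
    simpa [mul_assoc] using this

variable {d d' : ℕ} {ρ : G → Matrix (Fin d) (Fin d) ℂ} {ρ' : G → Matrix (Fin d') (Fin d') ℂ}

lemma rep_mul_inv (h : IsCentRep r ρ) {z : G} (hz : z * r = r * z) :
    ρ z * ρ z⁻¹ = 1 := by
  rw [← h.2.1 z z⁻¹ hz (cent_inv r hz), mul_inv_cancel, h.1]

lemma rep_inv_mul (h : IsCentRep r ρ) {z : G} (hz : z * r = r * z) :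
    ρ z⁻¹ * ρ z = 1 := by
  rw [← h.2.1 z⁻¹ z (cent_inv r hz) hz, inv_mul_cancel, h.1]

lemma rep_inv (h : IsCentRep r ρ) {z : G} (hz : z * r = r * z) :
    ρ z⁻¹ = (ρ z)ᴴ := by
  have h3 : ρ z * (ρ z)ᴴ = 1 := by
    have := (h.2.2 z hz).2
    simpa [Matrix.star_eq_conjTranspose] using this
  calc ρ z⁻¹ = ρ z⁻¹ * (ρ z * (ρ z)ᴴ) := by rw [h3, mul_one]
    _ = (ρ z⁻¹ * ρ z) * (ρ z)ᴴ := by rw [mul_assoc]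
    _ = (ρ z)ᴴ := by rw [rep_inv_mul r h hz, one_mul]

lemma T_comm (hρ : IsCentRep r ρ) (hρ' : IsCentRep r ρ')
    (X : Matrix (Fin d') (Fin d) ℂ) {w : G} (hw : w * r = r * w) :
    ρ' w * (∑ z ∈ centFinset r, ρ' z⁻¹ * X * ρ z)
      = (∑ z ∈ centFinset r, ρ' z⁻¹ * X * ρ z) * ρ w := by
  have key : ∀ z ∈ centFinset r,
      ρ' w * (ρ' (z * w)⁻¹ * X * ρ (z * w)) = (ρ' z⁻¹ * X * ρ z) * ρ w := by
    intro z hz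
    have hz' := (mem_cent_iff r).mp hz
    rw [mul_inv_rev, hρ'.2.1 w⁻¹ z⁻¹ (cent_inv r hw) (cent_inv r hz'),
      hρ.2.1 z w hz' hw]
    simp only [← Matrix.mul_assoc]
    rw [rep_mul_inv r hρ' hw, Matrix.one_mul]
  calc ρ' w * (∑ z ∈ centFinset r, ρ' z⁻¹ * X * ρ z)
      = ∑ z ∈ centFinset r, ρ' w * (ρ' z⁻¹ * X * ρ z) :=
        Matrix.mul_sum (centFinset r) (fun z => ρ' z⁻¹ * X * ρ z) (ρ' w)
    _ = ∑ z ∈ centFinset r, ρ' w * (ρ' (z * w)⁻¹ * X * ρ (z * w)) :=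
        (sum_cent_mul_right r hw (fun z => ρ' w * (ρ' z⁻¹ * X * ρ z))).symm
    _ = ∑ z ∈ centFinset r, (ρ' z⁻¹ * X * ρ z) * ρ w := Finset.sum_congr rfl key
    _ = (∑ z ∈ centFinset r, ρ' z⁻¹ * X * ρ z) * ρ w :=
        (Matrix.sum_mul (centFinset r) (fun z => ρ' z⁻¹ * X * ρ z) (ρ w)).symm

lemma schur_noniso (hρ : IsCentIrrep r ρ) (hρ' : IsCentIrrep r ρ')
    (hiso : ¬ RepIsoOn r ρ ρ') (X : Matrix (Fin d') (Fin d) ℂ) :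
    (∑ z ∈ centFinset r, ρ' z⁻¹ * X * ρ z) = 0 := by
  set T := ∑ z ∈ centFinset r, ρ' z⁻¹ * X * ρ z with hTdef
  by_contra hTne
  have hcomm : ∀ w : G, w * r = r * w → ρ' w * T = T * ρ w :=
    fun w hw => T_comm r hρ.1 hρ'.1 X hw
  have hcommH : ∀ w : G, w * r = r * w → ρ w * Tᴴ = Tᴴ * ρ' w := by
    intro w hw
    have h := congrArg Matrix.conjTranspose (hcomm w⁻¹ (cent_inv r hw))
    rw [Matrix.conjTranspose_mul, Matrix.conjTranspose_mul, rep_inv r hρ.1 hw,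
      rep_inv r hρ'.1 hw, Matrix.conjTranspose_conjTranspose,
      Matrix.conjTranspose_conjTranspose] at h
    exact h.symm
  have hTT : ∀ w : G, w * r = r * w → (T * Tᴴ) * ρ' w = ρ' w * (T * Tᴴ) := by
    intro w hw
    calc (T * Tᴴ) * ρ' w = T * (Tᴴ * ρ' w) := Matrix.mul_assoc T Tᴴ (ρ' w)
      _ = T * (ρ w * Tᴴ) := by rw [hcommH w hw]
      _ = (T * ρ w) * Tᴴ := (Matrix.mul_assoc T (ρ w) Tᴴ).symm
      _ = ρ' w * (T * Tᴴ) := by rw [← hcomm w hw]; exact Matrix.mul_assoc (ρ' w) T Tᴴ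
  have hHT : ∀ w : G, w * r = r * w → (Tᴴ * T) * ρ w = ρ w * (Tᴴ * T) := by
    intro w hw
    calc (Tᴴ * T) * ρ w = Tᴴ * (T * ρ w) := Matrix.mul_assoc Tᴴ T (ρ w)
      _ = Tᴴ * (ρ' w * T) := by rw [hcomm w hw]
      _ = (Tᴴ * ρ' w) * T := (Matrix.mul_assoc Tᴴ (ρ' w) T).symm
      _ = ρ w * (Tᴴ * T) := by rw [← hcommH w hw]; exact Matrix.mul_assoc (ρ w) Tᴴ T
  obtain ⟨c, hc⟩ := hρ'.2 (T * Tᴴ) hTT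
  obtain ⟨c', hc'⟩ := hρ.2 (Tᴴ * T) hHT
  have hc0 : c ≠ 0 := by
    intro h0
    rw [h0, zero_smul] at hc
    exact hTne (Matrix.self_mul_conjTranspose_eq_zero.mp hc)
  have hcc' : c = c' := by
    have e1 : (T * Tᴴ) * T = c • T := by rw [hc, Matrix.smul_mul, Matrix.one_mul]
    have e2 : T * (Tᴴ * T) = c' • T := by rw [hc', Matrix.mul_smul, Matrix.mul_one]
    have e3 : c • T = c' • T := by rw [← e1, ← e2, Matrix.mul_assoc]
    have := sub_eq_zero.mpr e3
    rw [← sub_smul] at this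
    rcases smul_eq_zero.mp this with h | h
    · exact sub_eq_zero.mp h
    · exact absurd h hTne
  apply hiso
  refine ⟨c⁻¹ • Tᴴ, T, ?_, ?_, ?_⟩
  · rw [Matrix.smul_mul, hc', ← hcc', smul_smul, inv_mul_cancel₀ hc0, one_smul]
  · rw [Matrix.mul_smul, hc, smul_smul, inv_mul_cancel₀ hc0, one_smul]
  · intro z hz
    rw [Matrix.mul_smul, Matrix.smul_mul, hcommH z hz]

lemma schur_same (hρ : IsCentIrrep r ρ) (hd : 0 < d) (X : Matrix (Fin d) (Fin d) ℂ) :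
    (∑ z ∈ centFinset r, ρ z⁻¹ * X * ρ z)
      = ((((centFinset r).card : ℂ) * X.trace) / (d : ℂ)) • 1 := by
  have hcomm : ∀ z : G, z * r = r * z →
      (∑ w ∈ centFinset r, ρ w⁻¹ * X * ρ w) * ρ z
        = ρ z * (∑ w ∈ centFinset r, ρ w⁻¹ * X * ρ w) :=
    fun z hz => (T_comm r hρ.1 hρ.1 X hz).symm
  obtain ⟨c, hc⟩ := hρ.2 _ hcomm
  have hdne : (d : ℂ) ≠ 0 := Nat.cast_ne_zero.mpr hd.ne'
  have htr : (∑ z ∈ centFinset r, ρ z⁻¹ * X * ρ z).trace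
      = ((centFinset r).card : ℂ) * X.trace := by
    rw [Matrix.trace_sum]
    rw [Finset.sum_congr rfl (fun z hz => ?_), Finset.sum_const, nsmul_eq_mul]
    have hz' := (mem_cent_iff r).mp hz
    rw [Matrix.trace_mul_comm, ← mul_assoc, rep_mul_inv r hρ.1 hz', one_mul]
  have hcd : c * (d : ℂ) = ((centFinset r).card : ℂ) * X.trace := by
    rw [← htr, hc, Matrix.trace_smul, Matrix.trace_one, smul_eq_mul, Fintype.card_fin]
  rw [hc]
  congr 1
  rw [eq_div_iff hdne]
  exact hcd

lemma coeff_entry (hρ' : IsCentRep r ρ') (n m : Fin d) (n' m' : Fin d') :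
    ∑ z ∈ centFinset r, (starRingEnd ℂ) (ρ' z n' m') * ρ z n m
      = (∑ z ∈ centFinset r,
          ρ' z⁻¹ * Matrix.single n' n (1:ℂ) * ρ z : Matrix (Fin d') (Fin d) ℂ) m' m := by
  rw [Matrix.sum_apply]
  refine Finset.sum_congr rfl (fun z hz => ?_)
  rw [rep_inv r hρ' ((mem_cent_iff r).mp hz)]
  simp [Matrix.mul_apply, Matrix.single, Matrix.conjTranspose_apply, ite_and,
    Finset.sum_ite_eq, Finset.sum_ite_eq', mul_ite, ite_mul, Finset.mul_sum]

lemma trace_std (n' n : Fin d) :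
    (Matrix.single n' n (1 : ℂ)).trace = if n' = n then 1 else 0 := by
  rw [Matrix.trace]
  simp [Matrix.diag, Matrix.single, ite_and, Finset.sum_ite_eq, eq_comm]

lemma S_noniso_eval (hρ : IsCentIrrep r ρ) (hρ' : IsCentIrrep r ρ')
    (hiso : ¬ RepIsoOn r ρ ρ') (n m : Fin d) (n' m' : Fin d') :
    ∑ z ∈ centFinset r, (starRingEnd ℂ) (ρ' z n' m') * ρ z n m = 0 := by
  rw [coeff_entry r hρ'.1 n m n' m', schur_noniso r hρ hρ' hiso]
  simp

lemma S_same_eval (hρ : IsCentIrrep r ρ) (hd : 0 < d) (n₁ m₁ n₂ m₂ : Fin d) :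
    ∑ z ∈ centFinset r, (starRingEnd ℂ) (ρ z n₂ m₂) * ρ z n₁ m₁
      = if n₁ = n₂ ∧ m₁ = m₂ then ((centFinset r).card : ℂ) / (d : ℂ) else 0 := by
  rw [coeff_entry r hρ.1 n₁ m₁ n₂ m₂, schur_same r hρ hd, trace_std]
  by_cases h1 : n₁ = n₂ <;> by_cases h2 : m₁ = m₂ <;>
    simp [h1, h2, Matrix.one_apply, eq_comm, Ne.symm]

end helpers

section main
open scoped Matrix ComplexOrder
set_option linter.unusedSectionVars false
variable {G : Type*} [Group G] [Fintype G] (r : G) {p : G → G}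

lemma transversal_inj (hp : ∀ c ∈ conjClass r, p c * r * (p c)⁻¹ = c)
    {a b : G} (ha : a ∈ (conjClass r).image p) (hb : b ∈ (conjClass r).image p)
    (hab : a * r * a⁻¹ = b * r * b⁻¹) : a = b := by
  obtain ⟨c, hc, rfl⟩ := Finset.mem_image.mp ha
  obtain ⟨c', hc', rfl⟩ := Finset.mem_image.mp hb
  rw [hp c hc, hp c' hc'] at hab
  rw [hab]

lemma conj_mul_cent {a w : G} (hw : w * r = r * w) :
    (a * w) * r * (a * w)⁻¹ = a * r * a⁻¹ := by
  rw [mul_inv_rev, mul_assoc a w r, hw]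
  group

lemma pair_eq_iff (hp : ∀ c ∈ conjClass r, p c * r * (p c)⁻¹ = c)
    {q pt q' pt' : G}
    (hq : q ∈ (conjClass r).image p) (hpt : pt ∈ (conjClass r).image p)
    (hq' : q' ∈ (conjClass r).image p) (hpt' : pt' ∈ (conjClass r).image p)
    {z z' : G} (hz : z * r = r * z) (hz' : z' * r = r * z') :
    ((q * z * pt⁻¹, pt * r * pt⁻¹) : G × G) = (q' * z' * pt'⁻¹, pt' * r * pt'⁻¹)
      ↔ q = q' ∧ pt = pt' ∧ z = z' := by
  constructor
  · intro h
    rw [Prod.mk.injEq] at h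
    obtain ⟨h1, h2⟩ := h
    have hptpt : pt = pt' := transversal_inj r hp hpt hpt' h2
    subst hptpt
    have hqz : q * z = q' * z' := mul_right_cancel h1
    have hq2 : q * r * q⁻¹ = q' * r * q'⁻¹ := by
      rw [← conj_mul_cent r hz, hqz, conj_mul_cent r hz']
    have hqq : q = q' := transversal_inj r hp hq hq' hq2
    subst hqq
    exact ⟨rfl, rfl, mul_left_cancel hqz⟩
  · rintro ⟨rfl, rfl, rfl⟩
    rfl

lemma herm_vvec {d d' : ℕ} (ρ : G → Matrix (Fin d) (Fin d) ℂ)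
    (ρ' : G → Matrix (Fin d') (Fin d') ℂ)
    (hp : ∀ c ∈ conjClass r, p c * r * (p c)⁻¹ = c)
    (n m : Fin d) (n' m' : Fin d') {q pt q' pt' : G}
    (hq : q ∈ (conjClass r).image p) (hpt : pt ∈ (conjClass r).image p)
    (hq' : q' ∈ (conjClass r).image p) (hpt' : pt' ∈ (conjClass r).image p) :
    herm (vvec r ρ' n' m' q' pt') (vvec r ρ n m q pt)
      = if q = q' ∧ pt = pt'
          then ∑ z ∈ centFinset r, (starRingEnd ℂ) (ρ' z n' m') * ρ z n m
          else 0 := by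
  have inner : ∀ (P' P : G × G) (c' c : ℂ),
      ∑ x : G × G, ((starRingEnd ℂ) c' * (if x = P' then 1 else 0))
          * (c * (if x = P then 1 else 0))
        = (starRingEnd ℂ) c' * c * (if P = P' then 1 else 0) := by
    intro P' P c' c
    by_cases hP : P = P'
    · subst hP
      simp [ite_mul, mul_ite, Finset.sum_ite_eq']
    · rw [if_neg hP, mul_zero]
      refine Finset.sum_eq_zero fun x _ => ?_
      by_cases hx : x = P
      · subst hx
        rw [if_neg hP, mul_zero, zero_mul]
      · rw [if_neg hx, mul_zero, mul_zero]
  have step1 : herm (vvec r ρ' n' m' q' pt') (vvec r ρ n m q pt)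
      = ∑ z ∈ centFinset r, ∑ z' ∈ centFinset r,
          (starRingEnd ℂ) (ρ' z' n' m') * ρ z n m *
            (if ((q * z * pt⁻¹, pt * r * pt⁻¹) : G × G)
                = (q' * z' * pt'⁻¹, pt' * r * pt'⁻¹) then 1 else 0) := by
    rw [herm]
    simp only [vvec, Finset.sum_apply, Pi.smul_apply, Fgh, smul_eq_mul, map_sum, map_mul,
      apply_ite (starRingEnd ℂ), map_one, map_zero, Finset.sum_mul, Finset.mul_sum]
    rw [Finset.sum_comm]
    refine Finset.sum_congr rfl fun z hz => ?_
    rw [Finset.sum_comm]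
    refine Finset.sum_congr rfl fun z' hz' => ?_
    simpa using inner (q' * z' * pt'⁻¹, pt' * r * pt'⁻¹) (q * z * pt⁻¹, pt * r * pt⁻¹)
      (ρ' z' n' m') (ρ z n m)
  rw [step1]
  have step2 : ∀ z' ∈ centFinset r, ∀ z ∈ centFinset r,
      (if ((q * z * pt⁻¹, pt * r * pt⁻¹) : G × G)
          = (q' * z' * pt'⁻¹, pt' * r * pt'⁻¹) then (1:ℂ) else 0)
        = if q = q' ∧ pt = pt' ∧ z = z' then 1 else 0 := by
    intro z' hz' z hz
    simp only [pair_eq_iff r hp hq hpt hq' hpt'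
      ((mem_cent_iff r).mp hz) ((mem_cent_iff r).mp hz')]
  by_cases hqp : q = q' ∧ pt = pt'
  · rw [if_pos hqp]
    obtain ⟨rfl, rfl⟩ := hqp
    refine Finset.sum_congr rfl fun z hz => ?_
    rw [Finset.sum_congr rfl (fun z' hz' => by rw [step2 z' hz' z hz])]
    simp [mul_ite, Finset.sum_ite_eq, hz]
  · rw [if_neg hqp]
    refine Finset.sum_eq_zero fun z hz => Finset.sum_eq_zero fun z' hz' => ?_
    rw [step2 z' hz' z hz, if_neg (fun hh => hqp ⟨hh.1, hh.2.1⟩), mul_zero]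

end main

/-- Orthogonality of matrix-coefficient vectors. -/
theorem vvec_orthogonal (G : Type*) [Group G] [Fintype G]
    (r : G) (p : G → G) (hp : ∀ c ∈ conjClass r, p c * r * (p c)⁻¹ = c)
    {d d' : ℕ}
    (ρ : G → Matrix (Fin d) (Fin d) ℂ) (ρ' : G → Matrix (Fin d') (Fin d') ℂ)
    (hρ : IsCentIrrep r ρ) (hρ' : IsCentIrrep r ρ')
    (n m : Fin d) (n' m' : Fin d') (q pt q' pt' : G)
    (hq : q ∈ (conjClass r).image p) (hpt : pt ∈ (conjClass r).image p)
    (hq' : q' ∈ (conjClass r).image p) (hpt' : pt' ∈ (conjClass r).image p) :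
    -- (i) non-isomorphic representations give orthogonal vectors
    (¬ RepIsoOn r ρ ρ' → herm (vvec r ρ' n' m' q' pt') (vvec r ρ n m q pt) = 0) ∧
    -- (ii) the same representation
    (∀ (n₁ m₁ n₂ m₂ : Fin d) (q₁ pt₁ q₂ pt₂ : G),
      q₁ ∈ (conjClass r).image p → pt₁ ∈ (conjClass r).image p →
      q₂ ∈ (conjClass r).image p → pt₂ ∈ (conjClass r).image p →
      herm (vvec r ρ n₂ m₂ q₂ pt₂) (vvec r ρ n₁ m₁ q₁ pt₁) =
        if n₁ = n₂ ∧ m₁ = m₂ ∧ q₁ = q₂ ∧ pt₁ = pt₂ then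
          ((centFinset r).card : ℂ) / (d : ℂ)
        else 0) := by
  constructor
  · intro hiso
    rw [herm_vvec r ρ ρ' hp n m n' m' hq hpt hq' hpt']
    by_cases h : q = q' ∧ pt = pt'
    · rw [if_pos h, S_noniso_eval r hρ hρ' hiso]
    · rw [if_neg h]
  · intro n₁ m₁ n₂ m₂ q₁ pt₁ q₂ pt₂ h1 h2 h3 h4
    have hd : 0 < d := n₁.pos
    rw [herm_vvec r ρ ρ hp n₁ m₁ n₂ m₂ h1 h2 h3 h4]
    by_cases hq12 : q₁ = q₂ ∧ pt₁ = pt₂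
    · rw [if_pos hq12, S_same_eval r hρ hd]
      by_cases hnm : n₁ = n₂ ∧ m₁ = m₂
      · rw [if_pos hnm, if_pos ⟨hnm.1, hnm.2, hq12.1, hq12.2⟩]
      · rw [if_neg hnm, if_neg (by tauto)]
    · rw [if_neg hq12, if_neg (by tauto)]


end
end

section
/- Let G be a finite group, r ∈ G, and z ∈ Z(r) (i.e. zr = rz). Let C be the conjugacy class of r in G and p : C → G a transversal with p(c)·r·p(c)⁻¹ = c for all c ∈ C. Let K be the conjugacy class of z in the group Z(r). Then, as functions G × G → ℂ, Σ_{c∈C} Σ_{k∈K} F^{c, p(c)·k·p(c)⁻¹} = (|K|/|Z(r)|)·Σ_{g∈G} F^{g·r·g⁻¹, g·z·g⁻¹}. -/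
/-!
Statement 14: For a finite group `G`, `r ∈ G`, `z ∈ Z(r)`, a transversal `p` of the
conjugacy class `C` of `r`, and `K` the conjugacy class of `z` in the group `Z(r)`:
`Σ_{c∈C} Σ_{k∈K} F^{c, p(c)·k·p(c)⁻¹} = (|K|/|Z(r)|)·Σ_{g∈G} F^{g·r·g⁻¹, g·z·g⁻¹}`.
-/

open scoped Classical

noncomputable section

/-- The conjugacy class of `x` in the group `Z(r)`, as a `Finset` of `G`. -/
def conjClassIn {G : Type*} [Group G] [Fintype G] (r x : G) : Finset G :=
  (centFinset r).image fun w => w * x * w⁻¹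

/-!
Every `g ∈ G` factors uniquely as `g = p(c) * w` with `c = g r g⁻¹ ∈ C` and `w ∈ Z(r)`, and then
`g z g⁻¹ = p(c) (w z w⁻¹) p(c)⁻¹`. As `w` runs over `Z(r)`, `w z w⁻¹` runs over `K`, hitting each
element `|Z(r) ∩ Z(z)| = |Z(r)| / |K|` times (orbit–stabilizer), which accounts for the factor.
-/

open Finset

section ConjugationInCentralizer

variable {G : Type*} [Group G]

theorem conj_eq_conj_iff_commute {a b z : G} :
    a * z * a⁻¹ = b * z * b⁻¹ ↔ Commute (b⁻¹ * a) z := by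
  rw [Commute, SemiconjBy, ← mul_left_inj a, ← mul_right_inj b⁻¹]
  simp only [mul_assoc, inv_mul_cancel_left, inv_mul_cancel, mul_one]

variable [Fintype G]

theorem mem_centFinset {r w : G} : w ∈ centFinset r ↔ Commute w r := by
  simp [centFinset, Commute, SemiconjBy]

theorem one_mem_centFinset (r : G) : (1 : G) ∈ centFinset r :=
  mem_centFinset.mpr (Commute.one_left r)

theorem card_filter_conj_eq_card_inter {r z w₀ : G} (hw₀ : w₀ ∈ centFinset r) :
    #{w ∈ centFinset r | w * z * w⁻¹ = w₀ * z * w₀⁻¹} = #(centFinset r ∩ centFinset z) := by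
  have hw₀r := mem_centFinset.mp hw₀
  refine card_nbij' (w₀⁻¹ * ·) (w₀ * ·) (fun w hw => ?_) (fun s hs => ?_)
    (fun w _ => mul_inv_cancel_left w₀ w) (fun s _ => inv_mul_cancel_left w₀ s)
  · simp only [coe_filter, Set.mem_ofPred_eq, mem_centFinset, conj_eq_conj_iff_commute] at hw
    simp only [coe_inter, Set.mem_inter_iff, mem_coe, mem_centFinset]
    exact ⟨hw₀r.inv_left.mul_left hw.1, hw.2⟩
  · simp only [coe_inter, Set.mem_inter_iff, mem_coe, mem_centFinset] at hs
    simp only [coe_filter, Set.mem_ofPred_eq, mem_centFinset, conj_eq_conj_iff_commute,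
      inv_mul_cancel_left]
    exact ⟨hw₀r.mul_left hs.1, hs.2⟩

theorem sum_centFinset_conj {M : Type*} [AddCommMonoid M] (r z : G) (f : G → M) :
    ∑ w ∈ centFinset r, f (w * z * w⁻¹)
      = #(centFinset r ∩ centFinset z) • ∑ k ∈ conjClassIn r z, f k := by
  rw [sum_comp, conjClassIn, smul_sum]
  refine sum_congr rfl fun k hk => ?_
  obtain ⟨w₀, hw₀, rfl⟩ := mem_image.mp hk
  rw [card_filter_conj_eq_card_inter hw₀]

theorem card_centFinset_eq_mul (r z : G) :
    #(centFinset r) = #(conjClassIn r z) * #(centFinset r ∩ centFinset z) := by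
  simpa [mul_comm] using sum_centFinset_conj (M := ℕ) r z (fun _ => 1)

theorem sum_eq_sum_conjClass_sum_centFinset {M : Type*} [AddCommMonoid M] {r : G} {p : G → G}
    (hp : ∀ c ∈ conjClass r, p c * r * (p c)⁻¹ = c) (f : G → G → M) :
    ∑ g : G, f (g * r * g⁻¹) g = ∑ c ∈ conjClass r, ∑ w ∈ centFinset r, f c (p c * w) := by
  rw [← sum_product']
  refine sum_nbij' (fun g => (g * r * g⁻¹, (p (g * r * g⁻¹))⁻¹ * g)) (fun q => p q.1 * q.2)
    (fun g _ => ?_) (fun _ _ => mem_coe.mpr (mem_univ _)) (fun g _ => mul_inv_cancel_left _ g)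
    (fun q hq => ?_) (fun g _ => ?_)
  · have hc : g * r * g⁻¹ ∈ conjClass r := mem_image_of_mem _ (mem_univ g)
    have hg : Commute ((p (g * r * g⁻¹))⁻¹ * g) r :=
      conj_eq_conj_iff_commute.mp (hp _ hc).symm
    exact mem_coe.mpr (mem_product.mpr ⟨hc, mem_centFinset.mpr hg⟩)
  · obtain ⟨hc, hw⟩ := mem_product.mp (mem_coe.mp hq)
    have hconj : p q.1 * q.2 * r * (p q.1 * q.2)⁻¹ = q.1 := by
      rw [(conj_eq_conj_iff_commute (b := p q.1)).mpr (by simpa using mem_centFinset.mp hw),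
        hp _ hc]
    simp only [hconj, inv_mul_cancel_left]
  · simp only [mul_inv_cancel_left]

end ConjugationInCentralizer

theorem class_sum_identity_first_general (G : Type*) [Group G] [Fintype G]
    (r z : G)
    (p : G → G) (hp : ∀ c ∈ conjClass r, p c * r * (p c)⁻¹ = c) :
    ∑ c ∈ conjClass r, ∑ k ∈ conjClassIn r z, Fgh c (p c * k * (p c)⁻¹)
      = (((conjClassIn r z).card : ℂ) / ((centFinset r).card : ℂ)) •
          ∑ g : G, Fgh (g * r * g⁻¹) (g * z * g⁻¹) := by
  have hcard :
      (#(conjClassIn r z) : ℂ) / #(centFinset r) * #(centFinset r ∩ centFinset z) = 1 := by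
    rw [div_mul_eq_mul_div, ← Nat.cast_mul, ← card_centFinset_eq_mul, div_self]
    exact Nat.cast_ne_zero.mpr (card_ne_zero_of_mem (one_mem_centFinset r))
  rw [sum_eq_sum_conjClass_sum_centFinset hp (fun c g => Fgh c (g * z * g⁻¹)), smul_sum]
  refine sum_congr rfl fun c _ => ?_
  have hconj : ∀ w : G, p c * w * z * (p c * w)⁻¹ = p c * (w * z * w⁻¹) * (p c)⁻¹ := by
    intro w; group
  rw [sum_congr rfl fun w _ => congrArg (Fgh c) (hconj w),
    sum_centFinset_conj r z (fun k => Fgh c (p c * k * (p c)⁻¹)), ← Nat.cast_smul_eq_nsmul ℂ,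
    smul_smul, hcard, one_smul]

theorem class_sum_identity_first (G : Type*) [Group G] [Fintype G]
    (r z : G) (hz : z * r = r * z)
    (p : G → G) (hp : ∀ c ∈ conjClass r, p c * r * (p c)⁻¹ = c) :
    ∑ c ∈ conjClass r, ∑ k ∈ conjClassIn r z, Fgh c (p c * k * (p c)⁻¹)
      = (((conjClassIn r z).card : ℂ) / ((centFinset r).card : ℂ)) •
          ∑ g : G, Fgh (g * r * g⁻¹) (g * z * g⁻¹) :=
  class_sum_identity_first_general G r z p hp

end
end
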